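/- arXiv:1606.08111 — 6 statements merged into one kernel-verified Lean document; each statement's English description precedes it below -/
import Mathlib

section
/- For all real constants a₁, a₂, κ₁, κ₂, the path x(t) = R(t)·(a₁ cos t + a₂ sin t − 1, −a₂ cos t + a₁ sin t − 1/2)ᵀ + (κ₁, κ₂)ᵀ, where R(t) is the rotation matrix by angle t, satisfies the differential equation x''(t) = R(t)·((−1, −1/2)ᵀ + M(t)·x'(t)) with M(t) = ((2 sin t, −2 cos t), (2 cos t, 2 sin t)), for all t ∈ ℝ. -/
open Real

/-- Rotation of a vector in ℝ² by angle `t`. -/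
noncomputable def rot (t : ℝ) (p : ℝ × ℝ) : ℝ × ℝ :=
  (Real.cos t * p.1 - Real.sin t * p.2, Real.sin t * p.1 + Real.cos t * p.2)

/-!
With `c = (a₁, -a₂)` and `w = (1, 1/2)` the inner vector is `R(t) c - w`, so
`x(t) = R(2t) c - R(t) w + κ`. Differentiating `R(kt) p` multiplies it by `k` and turns `p` by a
quarter (`perp`), hence `x' = 2 R(2t) (perp c) - R(t) (perp w)` and `x'' = -4 R(2t) c + R(t) w`.
Since `M(t) = 2 R(π/2 - t)`, the right-hand side is `-R(t) w + 2 perp x'`, the same vector.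
-/

def perp (p : ℝ × ℝ) : ℝ × ℝ := (-p.2, p.1)

lemma rot_add (t : ℝ) (p q : ℝ × ℝ) : rot t (p + q) = rot t p + rot t q := by
  ext <;> simp only [rot, Prod.fst_add, Prod.snd_add] <;> ring

lemma rot_sub (t : ℝ) (p q : ℝ × ℝ) : rot t (p - q) = rot t p - rot t q := by
  ext <;> simp only [rot, Prod.fst_sub, Prod.snd_sub] <;> ring

lemma rot_rot (s t : ℝ) (p : ℝ × ℝ) : rot s (rot t p) = rot (s + t) p := by
  ext <;> simp only [rot, cos_add, sin_add] <;> ring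

lemma hasDerivAt_rot_mul (k : ℝ) (p : ℝ × ℝ) (t : ℝ) :
    HasDerivAt (fun s => rot (k * s) p) (k • rot (k * t) (perp p)) t := by
  have hcos : HasDerivAt (fun s => cos (k * s)) (-sin (k * t) * k) t :=
    (hasDerivAt_cos _).comp t ((hasDerivAt_id t).const_mul k |>.congr_deriv (mul_one k))
  have hsin : HasDerivAt (fun s => sin (k * s)) (cos (k * t) * k) t :=
    (hasDerivAt_sin _).comp t ((hasDerivAt_id t).const_mul k |>.congr_deriv (mul_one k))
  refine (((hcos.mul_const p.1).sub (hsin.mul_const p.2)).prodMk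
    ((hsin.mul_const p.1).add (hcos.mul_const p.2))).congr_deriv ?_
  ext <;> simp only [rot, perp, Prod.smul_mk, smul_eq_mul] <;> ring

lemma hasDerivAt_rot (p : ℝ × ℝ) (t : ℝ) :
    HasDerivAt (fun s => rot s p) (rot t (perp p)) t := by
  simpa using hasDerivAt_rot_mul 1 p t

lemma rot_twisted_eq_two_smul_perp (t : ℝ) (v : ℝ × ℝ) :
    rot t (2 * sin t * v.1 - 2 * cos t * v.2, 2 * cos t * v.1 + 2 * sin t * v.2) =
      (2 : ℝ) • perp v := by
  ext <;> simp only [rot, perp, Prod.smul_mk, smul_eq_mul]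
  · linear_combination (-2 * v.2) * sin_sq_add_cos_sq t
  · linear_combination (2 * v.1) * sin_sq_add_cos_sq t

theorem stmt_8 (a₁ a₂ κ₁ κ₂ : ℝ) (x : ℝ → ℝ × ℝ)
    (hx : ∀ t : ℝ, x t =
      rot t (a₁ * cos t + a₂ * sin t - 1, -a₂ * cos t + a₁ * sin t - 1/2) + (κ₁, κ₂)) :
    ∀ t : ℝ,
      deriv (deriv x) t =
        rot t ((-1, -1/2) +
          (2 * sin t * (deriv x t).1 - 2 * cos t * (deriv x t).2,
           2 * cos t * (deriv x t).1 + 2 * sin t * (deriv x t).2)) := by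
  set c : ℝ × ℝ := (a₁, -a₂)
  set w : ℝ × ℝ := (1, 1/2)
  have hx_closed : x = fun t => rot (2 * t) c - rot t w + (κ₁, κ₂) := by
    funext t
    have hinner : (a₁ * cos t + a₂ * sin t - 1, -a₂ * cos t + a₁ * sin t - 1/2) = rot t c - w := by
      ext <;> simp only [rot, c, w, Prod.fst_sub, Prod.snd_sub] <;> ring
    rw [hx, hinner, rot_sub, rot_rot, two_mul]
  have hdx : deriv x = fun t => (2 : ℝ) • rot (2 * t) (perp c) - rot t (perp w) := by
    funext t
    rw [hx_closed]
    exact (((hasDerivAt_rot_mul 2 c t).sub (hasDerivAt_rot w t)).add_const _).deriv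
  intro t
  have hddx : deriv (deriv x) t =
      (2 : ℝ) • (2 : ℝ) • rot (2 * t) (perp (perp c)) - rot t (perp (perp w)) := by
    rw [hdx]
    exact (((hasDerivAt_rot_mul 2 (perp c) t).const_smul (2 : ℝ)).sub
      (hasDerivAt_rot (perp w) t)).deriv
  rw [hddx, rot_add, rot_twisted_eq_two_smul_perp, hdx]
  ext <;> simp only [rot, perp, c, w, Prod.smul_mk, smul_eq_mul, Prod.fst_sub, Prod.snd_sub,
    Prod.fst_add, Prod.snd_add] <;> ring
end

section
/- For all real constants b₁, b₂, κ₁, κ₂, the path x(t) = R(t)·(−t²/4 + b₁ t + b₂, t/2 − b₁ − 1)ᵀ + (κ₁, κ₂)ᵀ satisfies x''(t) = R(t)·((−1, −1/2)ᵀ + M(t)·x'(t)) with M(t) = ((sin t, −cos t), ((3/2)cos t, (3/2)sin t)), for all t ∈ ℝ. -/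
open Real

/-!
Write `x t = R(t) p(t) + κ`. The product rule gives `(R p)' = R (p' + J p)`, with `J` the quarter
turn `(a, b) ↦ (-b, a)`; applied twice this yields `x' = R q` and `x'' = R (q' + J q)` for an
explicit polynomial path `q`. On the other side `M(t) R(t) = ((0, -1), (3/2, 0))` does not depend
on `t`, so the right-hand side is `R ((-1, -1/2) + (-q₂, (3/2) q₁))`, and `q' + J q` is exactly that.
-/

theorem hasDerivAt_rot_comp {p : ℝ → ℝ × ℝ} {p' : ℝ × ℝ} {t : ℝ} (hp : HasDerivAt p p' t) :
    HasDerivAt (fun s => rot s (p s)) (rot t (p' + (-(p t).2, (p t).1))) t := by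
  have hfst := ((hasDerivAt_cos t).mul hp.fst).sub ((hasDerivAt_sin t).mul hp.snd)
  have hsnd := ((hasDerivAt_sin t).mul hp.fst).add ((hasDerivAt_cos t).mul hp.snd)
  refine (hfst.prodMk hsnd).congr_deriv ?_
  simp only [rot, Prod.fst_add, Prod.snd_add, Prod.mk.injEq]
  constructor <;> ring

theorem sin_mul_rot_fst_sub_cos_mul_rot_snd (t : ℝ) (v : ℝ × ℝ) :
    sin t * (rot t v).1 - cos t * (rot t v).2 = -v.2 := by
  simp only [rot]
  linear_combination (-v.2) * sin_sq_add_cos_sq t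

theorem cos_mul_rot_fst_add_sin_mul_rot_snd (t : ℝ) (v : ℝ × ℝ) :
    cos t * (rot t v).1 + sin t * (rot t v).2 = v.1 := by
  simp only [rot]
  linear_combination v.1 * cos_sq_add_sin_sq t

theorem hasDerivAt_neg_sq_div_four_add (b c t : ℝ) :
    HasDerivAt (fun s : ℝ => -s ^ 2 / 4 + b * s + c) (-t / 2 + b) t := by
  refine ((((hasDerivAt_pow 2 t).neg.div_const 4).add
    ((hasDerivAt_id' t).const_mul b)).add_const c).congr_deriv ?_
  simp only [Nat.cast_ofNat]
  ring

theorem stmt_9 (b₁ b₂ κ₁ κ₂ : ℝ) (x : ℝ → ℝ × ℝ)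
    (hx : ∀ t : ℝ, x t =
      rot t (-t^2/4 + b₁ * t + b₂, t/2 - b₁ - 1) + (κ₁, κ₂)) :
    ∀ t : ℝ,
      deriv (deriv x) t =
        rot t ((-1, -1/2) +
          (sin t * (deriv x t).1 - cos t * (deriv x t).2,
           (3/2) * cos t * (deriv x t).1 + (3/2) * sin t * (deriv x t).2)) := by
  have hx' (s : ℝ) :
      HasDerivAt x (rot s (-s + (2 * b₁ + 1), -s ^ 2 / 4 + b₁ * s + (b₂ + 1/2))) s := by
    rw [funext hx]
    refine ((hasDerivAt_rot_comp ((hasDerivAt_neg_sq_div_four_add b₁ b₂ s).prodMk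
      ((((hasDerivAt_id' s).div_const 2).sub_const b₁).sub_const 1))).add_const _).congr_deriv ?_
    congr 1
    ext <;> dsimp <;> ring
  have hdx : deriv x = fun s => rot s (-s + (2 * b₁ + 1), -s ^ 2 / 4 + b₁ * s + (b₂ + 1/2)) :=
    funext fun s => (hx' s).deriv
  intro t
  have hx'' : HasDerivAt (deriv x) (rot t ((-1, -1/2) +
      (-(-t ^ 2 / 4 + b₁ * t + (b₂ + 1/2)), 3/2 * (-t + (2 * b₁ + 1))))) t := by
    rw [hdx]
    refine (hasDerivAt_rot_comp (((hasDerivAt_id' t).neg.add_const (2 * b₁ + 1)).prodMk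
      (hasDerivAt_neg_sq_div_four_add b₁ (b₂ + 1/2) t))).congr_deriv ?_
    congr 1
    refine Prod.ext rfl ?_
    dsimp
    ring
  rw [hx''.deriv, hdx, mul_assoc, mul_assoc, ← mul_add, cos_mul_rot_fst_add_sin_mul_rot_snd,
    sin_mul_rot_fst_sub_cos_mul_rot_snd]
end

section
/- For all real constants f₁, f₂, κ₁, κ₂, the path x(t) = R(t)·(f₁ cos(t/2) + f₂ sin(t/2) − 1, −f₂ cos(t/2) + f₁ sin(t/2) − 1)ᵀ + (κ₁, κ₂)ᵀ satisfies x''(t) = R(t)·((−1/2, −1/2)ᵀ + M(t)·x'(t)) with M(t) = (((3/2)sin t, −(3/2)cos t), ((3/2)cos t, (3/2)sin t)), for all t ∈ ℝ. -/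
/-!
Since `(f₁ cos (t/2) + f₂ sin (t/2), -f₂ cos (t/2) + f₁ sin (t/2)) = R(t/2) (f₁, -f₂)`, the path is
the superposition `x t = R(3t/2) (f₁, -f₂) + R(t) (-1, -1) + κ` of two uniform circular motions,
and `t ↦ R(θ t) p` has derivative `θ' • R(θ t + π/2) p`. On the other side, `R(t) M(t) = (3/2) R(π/2)`,
so the equation reads `x'' = R(t) (-1/2, -1/2) + (3/2) R(π/2) x'`, which both circular motions
satisfy term by term.
-/

open Real

lemma HasDerivAt.rot {θ : ℝ → ℝ} {θ' t : ℝ} (hθ : HasDerivAt θ θ' t) (p : ℝ × ℝ) :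
    HasDerivAt (fun s => rot (θ s) p) (θ' • rot (θ t + π / 2) p) t := by
  have h₁ := (hθ.cos.mul_const p.1).sub (hθ.sin.mul_const p.2)
  have h₂ := (hθ.sin.mul_const p.1).add (hθ.cos.mul_const p.2)
  refine (h₁.prodMk h₂).congr_deriv ?_
  ext <;> simp only [_root_.rot, cos_add_pi_div_two, sin_add_pi_div_two, Prod.smul_fst,
    Prod.smul_snd, smul_eq_mul] <;> ring

lemma rot_sin_cos_eq_smul_rot_pi_div_two (k t : ℝ) (v : ℝ × ℝ) :
    rot t (k * sin t * v.1 - k * cos t * v.2, k * cos t * v.1 + k * sin t * v.2) =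
      k • rot (π / 2) v := by
  ext <;> simp only [rot, cos_pi_div_two, sin_pi_div_two, Prod.smul_fst, Prod.smul_snd,
    smul_eq_mul]
  · linear_combination (-k * v.2) * sin_sq_add_cos_sq t
  · linear_combination (k * v.1) * sin_sq_add_cos_sq t

theorem stmt_11 (f₁ f₂ κ₁ κ₂ : ℝ) (x : ℝ → ℝ × ℝ)
    (hx : ∀ t : ℝ, x t =
      rot t (f₁ * cos (t/2) + f₂ * sin (t/2) - 1,
             -f₂ * cos (t/2) + f₁ * sin (t/2) - 1) + (κ₁, κ₂)) :
    ∀ t : ℝ,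
      deriv (deriv x) t =
        rot t ((-1/2, -1/2) +
          ((3/2) * sin t * (deriv x t).1 - (3/2) * cos t * (deriv x t).2,
           (3/2) * cos t * (deriv x t).1 + (3/2) * sin t * (deriv x t).2)) := by
  set a : ℝ × ℝ := (f₁, -f₂)
  set b : ℝ × ℝ := (-1, -1)
  have hx' : x = fun t => rot (3 / 2 * t) a + rot t b + (κ₁, κ₂) := by
    funext t
    have hhalf : (f₁ * cos (t/2) + f₂ * sin (t/2) - 1, -f₂ * cos (t/2) + f₁ * sin (t/2) - 1) =
        rot (t / 2) a + b := by
      ext <;> simp only [rot, b, Prod.fst_add, Prod.snd_add] <;> ring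
    rw [hx, hhalf, rot_add, rot_rot, show t + t / 2 = 3 / 2 * t by ring]
  have hdx : deriv x = fun t =>
      (3 / 2 : ℝ) • rot (3 / 2 * t + π / 2) a + rot (t + π / 2) b := by
    funext t
    rw [hx']
    have h := ((((hasDerivAt_id' t).const_mul (3 / 2)).rot a).add
      ((hasDerivAt_id' t).rot b)).add_const (κ₁, κ₂)
    rw [mul_one, one_smul] at h
    exact h.deriv
  intro t
  have hddx : deriv (deriv x) t =
      (3 / 2 : ℝ) • (3 / 2 : ℝ) • rot (3 / 2 * t + π / 2 + π / 2) a
        + rot (t + π / 2 + π / 2) b := by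
    have h := (((((hasDerivAt_id' t).const_mul (3 / 2)).add_const (π / 2)).rot a).const_smul
      (3 / 2 : ℝ)).add (((hasDerivAt_id' t).add_const (π / 2)).rot b)
    rw [mul_one, one_smul] at h
    rw [hdx]
    exact h.deriv
  rw [hddx, rot_add, rot_sin_cos_eq_smul_rot_pi_div_two, hdx]
  ext <;> simp only [rot, a, b, cos_add_pi_div_two, sin_add_pi_div_two, cos_pi_div_two,
    sin_pi_div_two, Prod.fst_add, Prod.snd_add, Prod.smul_fst, Prod.smul_snd, smul_eq_mul] <;> ring
end

section
/- If β ∈ (0, π/2) satisfies 3 sin(β/2) + sin(3β/2) + (√2 − 1)(−3 cos(β/2) + cos(3β/2)) = 0, then tan(β) satisfies 4 tan(β)³ + 3 tan(β) − 1 = 0. -/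
theorem stmt_17 (β : ℝ) (hβ : β ∈ Set.Ioo 0 (Real.pi / 2))
    (h : 3 * Real.sin (β/2) + Real.sin (3*β/2)
        + (Real.sqrt 2 - 1) * (-3 * Real.cos (β/2) + Real.cos (3*β/2)) = 0) :
    4 * Real.tan β ^ 3 + 3 * Real.tan β - 1 = 0 := by
  obtain ⟨hb0, hb2⟩ := hβ
  set r := Real.sqrt 2 with hrdef
  set s := Real.sin (β/2) with hs
  set c := Real.cos (β/2) with hcdef
  have hr : r ^ 2 = 2 := Real.sq_sqrt (by norm_num)
  have hsc : s ^ 2 + c ^ 2 = 1 := Real.sin_sq_add_cos_sq _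
  have h3s : Real.sin (3*β/2) = 3*s - 4*s^3 := by
    rw [show 3*β/2 = 3*(β/2) by ring, Real.sin_three_mul]
  have h3c : Real.cos (3*β/2) = 4*c^3 - 3*c := by
    rw [show 3*β/2 = 3*(β/2) by ring, Real.cos_three_mul]
  rw [h3s, h3c] at h
  have hq : s*(s^2+3*c^2) - (r-1)*(c*(3*s^2+c^2)) = 0 := by
    linear_combination h/2 + (3*s - 3*(r-1)*c) * hsc
  have hsin : Real.sin β = 2*s*c := by
    rw [show β = 2*(β/2) by ring, Real.sin_two_mul]
  have hcos : Real.cos β = c^2 - s^2 := by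
    rw [show β = 2*(β/2) by ring, Real.cos_two_mul]
    linear_combination hsc
  have hcpos : 0 < Real.cos β := Real.cos_pos_of_mem_Ioo ⟨by linarith [Real.pi_pos], hb2⟩
  rw [Real.tan_eq_sin_div_cos, hsin, hcos]
  have hne : c^2 - s^2 ≠ 0 := by rw [← hcos]; exact ne_of_gt hcpos
  have key : 4*(2*s*c)^3 + 3*(2*s*c)*(c^2-s^2)^2 - (c^2-s^2)^3 = 0 := by
    linear_combination (s*(s^2+3*c^2) + (r+1)*(c*(3*s^2+c^2))) * hq + (c*(3*s^2+c^2))^2 * hr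
  have goal' : 4 * ((2*s*c)/(c^2-s^2))^3 + 3*((2*s*c)/(c^2-s^2)) - 1
      = (4*(2*s*c)^3 + 3*(2*s*c)*(c^2-s^2)^2 - (c^2-s^2)^3)/(c^2-s^2)^3 := by
    field_simp
  rw [goal', key, zero_div]
end

section
/- The real number A = √(4 + (71+8√2)^(1/3) + (71−8√2)^(1/3))/4 satisfies sin(arctan((1/2)((√2+1)^(1/3) − (√2−1)^(1/3)))) · 4A = 1; that is, a₁ = (1/4)cosec(β) equals A where β = arctan((1/2)((√2+1)^(1/3) − (√2−1)^(1/3))). -/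
set_option maxHeartbeats 2000000 in
theorem stmt_18 :
    Real.sin (Real.arctan ((1/2) * ((Real.sqrt 2 + 1) ^ ((1:ℝ)/3)
        - (Real.sqrt 2 - 1) ^ ((1:ℝ)/3))))
      * (4 * (Real.sqrt (4 + (71 + 8 * Real.sqrt 2) ^ ((1:ℝ)/3)
        + (71 - 8 * Real.sqrt 2) ^ ((1:ℝ)/3)) / 4)) = 1 := by
  have h2 : Real.sqrt 2 * Real.sqrt 2 = 2 := Real.mul_self_sqrt (by norm_num)
  have h2lb : (1.4:ℝ) ≤ Real.sqrt 2 := by nlinarith [Real.sqrt_nonneg 2]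
  have h2ub : Real.sqrt 2 ≤ 1.5 := by nlinarith [Real.sqrt_nonneg 2]
  set a := (Real.sqrt 2 + 1) ^ ((1:ℝ)/3) with ha_def
  set b := (Real.sqrt 2 - 1) ^ ((1:ℝ)/3) with hb_def
  set u := ((71:ℝ) + 8 * Real.sqrt 2) ^ ((1:ℝ)/3) with hu_def
  set v := ((71:ℝ) - 8 * Real.sqrt 2) ^ ((1:ℝ)/3) with hv_def
  have hbase1 : (0:ℝ) ≤ Real.sqrt 2 + 1 := by linarith
  have hbase2 : (0:ℝ) ≤ Real.sqrt 2 - 1 := by linarith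
  have hbase3 : (0:ℝ) < 71 + 8 * Real.sqrt 2 := by linarith
  have hbase4 : (0:ℝ) < 71 - 8 * Real.sqrt 2 := by linarith
  have cube : ∀ x : ℝ, 0 ≤ x → (x ^ ((1:ℝ)/3)) ^ 3 = x := by
    intro x hx
    rw [← Real.rpow_natCast (x ^ ((1:ℝ)/3)) 3, ← Real.rpow_mul hx]
    norm_num
  have ha3 : a ^ 3 = Real.sqrt 2 + 1 := cube _ hbase1
  have hb3 : b ^ 3 = Real.sqrt 2 - 1 := cube _ hbase2
  have hu3 : u ^ 3 = 71 + 8 * Real.sqrt 2 := cube _ hbase3.le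
  have hv3 : v ^ 3 = 71 - 8 * Real.sqrt 2 := cube _ hbase4.le
  have hab : a * b = 1 := by
    rw [ha_def, hb_def, ← Real.mul_rpow hbase1 hbase2]
    have h : (Real.sqrt 2 + 1) * (Real.sqrt 2 - 1) = 1 := by nlinarith
    rw [h, Real.one_rpow]
  have huv : u * v = 17 := by
    rw [hu_def, hv_def, ← Real.mul_rpow hbase3.le hbase4.le]
    have h : (71 + 8 * Real.sqrt 2) * (71 - 8 * Real.sqrt 2) = 17 ^ (3:ℕ) := by nlinarith
    rw [h, ← Real.rpow_natCast (17:ℝ) 3, ← Real.rpow_mul (by norm_num)]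
    norm_num
  have hupos : 0 < u := Real.rpow_pos_of_pos hbase3 _
  have hvpos : 0 < v := Real.rpow_pos_of_pos hbase4 _
  clear_value a b u v
  -- cubic equations for s = a - b and w = u + v
  set s := a - b with hs_def
  set w := u + v with hw_def
  clear_value s w
  have hs : s ^ 3 = 2 - 3 * s := by
    rw [hs_def]; linear_combination ha3 - hb3 - 3 * (a - b) * hab
  have hw : w ^ 3 = 142 + 51 * w := by
    rw [hw_def]; linear_combination hu3 + hv3 + 3 * (u + v) * huv
  have hspos : 0 < s := by nlinarith [sq_nonneg s]
  have hslt : s < 2/3 := by nlinarith [sq_nonneg s]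
  have hu43 : (4.3:ℝ) < u := by
    by_contra h
    push_neg at h
    have h3 : u ^ 3 ≤ (4.3:ℝ) ^ 3 := pow_le_pow_left₀ hupos.le h 3
    rw [hu3] at h3; norm_num at h3; linarith
  have hv38 : (3.8:ℝ) < v := by
    by_contra h
    push_neg at h
    have h3 : v ^ 3 ≤ (3.8:ℝ) ^ 3 := pow_le_pow_left₀ hvpos.le h 3
    rw [hv3] at h3; norm_num at h3; linarith
  have hw81 : (8.1:ℝ) < w := by rw [hw_def]; linarith
  have hwpos : 0 < w := by linarith
  have hw51 : 51 < w ^ 2 := by nlinarith [sq_nonneg (w - 8.1)]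
  -- key polynomial identity
  have hkey : (4 - 3*s^2)^3 - 51*(4 - 3*s^2)*s^4 - 142*s^6 = 0 := by
    linear_combination (-16*(s^3 + 3*s + 2)) * hs
  have hfac : (s^2*w - (4 - 3*s^2)) *
      ((s^2*w)^2 + (s^2*w)*(4 - 3*s^2) + (4 - 3*s^2)^2 - 51*s^4) = 0 := by
    linear_combination s^6 * hw - hkey
  have hX2pos : 0 < 4 - 3*s^2 := by nlinarith
  have hX1pos : 0 < s^2*w := by positivity
  have hquad : 0 < (s^2*w)^2 + (s^2*w)*(4 - 3*s^2) + (4 - 3*s^2)^2 - 51*s^4 := by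
    nlinarith [mul_pos hX1pos hX2pos, sq_nonneg (4 - 3*s^2), mul_pos hspos hspos]
  have hlin : s^2*w = 4 - 3*s^2 := by
    rcases mul_eq_zero.mp hfac with h | h
    · linarith
    · exfalso; linarith
  -- trig part
  set t := (1/2) * s with ht_def
  clear_value t
  have htpos : 0 < t := by rw [ht_def]; linarith
  have hkey2 : t^2 * (4 + w) = 1 + t^2 := by
    rw [ht_def]; linear_combination (1/4) * hlin
  have h44 : (4:ℝ) + u + v = 4 + w := by rw [hw_def]; ring
  have h4w : (4:ℝ) + u + v = (1 + t^2) / t^2 := by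
    rw [h44, eq_div_iff (by positivity)]
    linear_combination hkey2
  have hrw : Real.sqrt (4 + u + v) = Real.sqrt (1 + t^2) / t := by
    rw [h4w, Real.sqrt_div (by positivity), Real.sqrt_sq htpos.le]
  rw [Real.sin_arctan, hrw]
  have hsq : 0 < Real.sqrt (1 + t^2) := Real.sqrt_pos.mpr (by positivity)
  field_simp
end

section
/- There exists a unique β ∈ (0, π/4) such that 3 sin(β/2) + sin(3β/2) + (√2 − 1)(−3 cos(β/2) + cos(3β/2)) = 0, and it equals arctan((1/2)((√2+1)^(1/3) − (√2−1)^(1/3))). -/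
open Real

private lemma cubic_inj {s r : ℝ} (h : 4*s^3 + 3*s = 4*r^3 + 3*r) : s = r := by
  nlinarith [sq_nonneg (s+r), sq_nonneg (s-r), sq_nonneg s, sq_nonneg r]

private lemma hr_cubic : 4 * ((1/2) * ((Real.sqrt 2 + 1) ^ ((1:ℝ)/3)
    - (Real.sqrt 2 - 1) ^ ((1:ℝ)/3)))^3 + 3 * ((1/2) * ((Real.sqrt 2 + 1) ^ ((1:ℝ)/3)
    - (Real.sqrt 2 - 1) ^ ((1:ℝ)/3))) = 1 := by
  have h2 : Real.sqrt 2 ^ 2 = 2 := Real.sq_sqrt (by norm_num)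
  have h2pos : (1:ℝ) < Real.sqrt 2 := by nlinarith [Real.sqrt_nonneg 2]
  set c := (Real.sqrt 2 + 1) ^ ((1:ℝ)/3) with hcdef
  set e := (Real.sqrt 2 - 1) ^ ((1:ℝ)/3) with hedef
  have hc3 : c^3 = Real.sqrt 2 + 1 := by
    rw [hcdef, ← Real.rpow_natCast (_ ^ ((1:ℝ)/3)) 3, ← Real.rpow_mul (by positivity)]
    norm_num
  have he3 : e^3 = Real.sqrt 2 - 1 := by
    rw [hedef, ← Real.rpow_natCast (_ ^ ((1:ℝ)/3)) 3, ← Real.rpow_mul (by linarith)]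
    norm_num
  have he : c * e = 1 := by
    have h : (c*e)^3 = 1 := by rw [mul_pow, hc3, he3]; nlinarith
    nlinarith [sq_nonneg (c*e - 1), sq_nonneg (c*e + 1), sq_nonneg (c*e)]
  linear_combination (1/2)*hc3 - (1/2)*he3 + ((3*e-3*c)/2)*he

private lemma key_ident (β : ℝ) (hC : Real.cos (β/2) ≠ 0) :
    3 * Real.sin (β/2) + Real.sin (3*β/2)
        + (Real.sqrt 2 - 1) * (-3 * Real.cos (β/2) + Real.cos (3*β/2))
      = 2 * Real.cos (β/2)^3 * (Real.tan (β/2)^3 + 3*Real.tan (β/2)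
          - (Real.sqrt 2 - 1) * (3*Real.tan (β/2)^2 + 1)) := by
  have h3 : 3*β/2 = 3*(β/2) := by ring
  have hS : Real.sin (β/2) = Real.tan (β/2) * Real.cos (β/2) :=
    (Real.tan_mul_cos hC).symm
  have hpyth : (Real.tan (β/2) * Real.cos (β/2))^2 + Real.cos (β/2)^2 = 1 := by
    rw [← hS]; exact Real.sin_sq_add_cos_sq _
  rw [h3, Real.sin_three_mul, Real.cos_three_mul, hS]
  linear_combination (6*(Real.sqrt 2 - 1)*Real.cos (β/2)
    - 6*Real.tan (β/2)*Real.cos (β/2)) * hpyth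

private lemma uniq (β : ℝ) (hβ : β ∈ Set.Ioo 0 (Real.pi/4))
    (hf : 3 * Real.sin (β/2) + Real.sin (3*β/2)
        + (Real.sqrt 2 - 1) * (-3 * Real.cos (β/2) + Real.cos (3*β/2)) = 0) :
    β = Real.arctan ((1/2) * ((Real.sqrt 2 + 1) ^ ((1:ℝ)/3)
        - (Real.sqrt 2 - 1) ^ ((1:ℝ)/3))) := by
  obtain ⟨hβ0, hβ1⟩ := hβ
  have hpi := Real.pi_pos
  have hx0 : 0 < β/2 := by linarith
  have hx1 : β/2 < Real.pi/2 := by linarith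
  have hC : 0 < Real.cos (β/2) := Real.cos_pos_of_mem_Ioo ⟨by linarith, hx1⟩
  set t := Real.tan (β/2) with htdef
  have ht0 : 0 < t := Real.tan_pos_of_pos_of_lt_pi_div_two hx0 hx1
  have ht1 : t < 1 := by
    have := Real.tan_lt_tan_of_lt_of_lt_pi_div_two (x := β/2) (y := Real.pi/4)
      (by linarith) (by linarith) (by linarith)
    rwa [Real.tan_pi_div_four] at this
  have h2 : Real.sqrt 2 ^ 2 = 2 := Real.sq_sqrt (by norm_num)
  have h2C : 2 * Real.cos (β/2)^3 ≠ 0 := by positivity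
  have hp : t^3 + 3*t - (Real.sqrt 2 - 1) * (3*t^2 + 1) = 0 := by
    have h := key_ident β hC.ne'
    rw [hf] at h
    exact ((mul_eq_zero.mp h.symm).resolve_left h2C)
  set s := Real.tan β with hsdef
  have hs : s = 2*t/(1 - t^2) := by
    have h := Real.tan_two_mul (x := β/2)
    rw [show 2*(β/2) = β by ring] at h
    rw [hsdef, htdef, h]
  have ht2 : (1:ℝ) - t^2 ≠ 0 := by nlinarith
  have hst : s * (1 - t^2) = 2*t := by rw [hs]; field_simp
  have key2 : (1-t^2)^3 * (4*s^3 + 3*s - 1)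
      = (t^3 + 3*t - (Real.sqrt 2 - 1)*(3*t^2+1))
          * (t^3 + 3*(Real.sqrt 2+1)*t^2 + 3*t + (Real.sqrt 2+1))
        + (Real.sqrt 2^2 - 2)*(3*t^2+1)^2 := by
    linear_combination (4*(s^2*(1-t^2)^2 + 2*t*s*(1-t^2) + 4*t^2) + 3*(1-t^2)^2) * hst
  rw [hp, h2] at key2
  simp only [zero_mul, sub_self, zero_add, add_zero] at key2
  have hs3 : 4*s^3 + 3*s - 1 = 0 := by
    have := mul_eq_zero.mp key2
    rcases this with h | h
    · exact absurd h (pow_ne_zero 3 ht2)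
    · exact h
  have hfin := cubic_inj (s := s) (r := (1/2) * ((Real.sqrt 2 + 1) ^ ((1:ℝ)/3)
      - (Real.sqrt 2 - 1) ^ ((1:ℝ)/3))) (by rw [hr_cubic]; linarith)
  rw [← hfin, hsdef, Real.arctan_tan (by linarith) (by linarith)]

theorem stmt_19 :
    (∃! β : ℝ, β ∈ Set.Ioo 0 (Real.pi / 4) ∧
      3 * Real.sin (β/2) + Real.sin (3*β/2)
        + (Real.sqrt 2 - 1) * (-3 * Real.cos (β/2) + Real.cos (3*β/2)) = 0) ∧
    (∀ β : ℝ, β ∈ Set.Ioo 0 (Real.pi / 4) →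
      3 * Real.sin (β/2) + Real.sin (3*β/2)
        + (Real.sqrt 2 - 1) * (-3 * Real.cos (β/2) + Real.cos (3*β/2)) = 0 →
      β = Real.arctan ((1/2) * ((Real.sqrt 2 + 1) ^ ((1:ℝ)/3)
        - (Real.sqrt 2 - 1) ^ ((1:ℝ)/3)))) := by
  set r := (1/2) * ((Real.sqrt 2 + 1) ^ ((1:ℝ)/3) - (Real.sqrt 2 - 1) ^ ((1:ℝ)/3)) with hrdef
  have hrc : 4*r^3 + 3*r = 1 := hr_cubic
  have hr0 : 0 < r := by nlinarith [sq_nonneg r, sq_nonneg (r-1), sq_nonneg (r+1)]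
  have hr1 : r < 1 := by nlinarith [sq_nonneg r, sq_nonneg (r-1), sq_nonneg (r+1)]
  set β₀ := Real.arctan r with hb0
  have hpi := Real.pi_pos
  have hβ00 : 0 < β₀ := by
    rw [hb0, ← Real.arctan_zero]; exact Real.arctan_strictMono hr0
  have hβ01 : β₀ < Real.pi/4 := by
    rw [hb0, ← Real.arctan_one]; exact Real.arctan_strictMono hr1
  have hx0 : 0 < β₀/2 := by linarith
  have hx1 : β₀/2 < Real.pi/2 := by linarith
  have hC : 0 < Real.cos (β₀/2) := Real.cos_pos_of_mem_Ioo ⟨by linarith, hx1⟩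
  set t := Real.tan (β₀/2) with htdef
  have ht0 : 0 < t := Real.tan_pos_of_pos_of_lt_pi_div_two hx0 hx1
  have ht1 : t < 1 := by
    have := Real.tan_lt_tan_of_lt_of_lt_pi_div_two (x := β₀/2) (y := Real.pi/4)
      (by linarith) (by linarith) (by linarith)
    rwa [Real.tan_pi_div_four] at this
  have ht2 : (1:ℝ) - t^2 ≠ 0 := by nlinarith
  have h2 : Real.sqrt 2 ^ 2 = 2 := Real.sq_sqrt (by norm_num)
  have hs : r = 2*t/(1 - t^2) := by
    have h := Real.tan_two_mul (x := β₀/2)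
    rw [show 2*(β₀/2) = β₀ by ring] at h
    rw [← Real.tan_arctan r, ← hb0, h, htdef]
  have hst : r * (1 - t^2) = 2*t := by rw [hs]; field_simp
  have key2 : (1-t^2)^3 * (4*r^3 + 3*r - 1)
      = (t^3 + 3*t - (Real.sqrt 2 - 1)*(3*t^2+1))
          * (t^3 + 3*(Real.sqrt 2+1)*t^2 + 3*t + (Real.sqrt 2+1))
        + (Real.sqrt 2^2 - 2)*(3*t^2+1)^2 := by
    linear_combination (4*(r^2*(1-t^2)^2 + 2*t*r*(1-t^2) + 4*t^2) + 3*(1-t^2)^2) * hst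
  rw [hrc, h2] at key2
  simp only [sub_self, zero_mul, mul_zero, add_zero, zero_add] at key2
  have hq : 0 < t^3 + 3*(Real.sqrt 2+1)*t^2 + 3*t + (Real.sqrt 2+1) := by
    have h2p : 0 < Real.sqrt 2 := Real.sqrt_pos.mpr (by norm_num)
    positivity
  have hp : t^3 + 3*t - (Real.sqrt 2 - 1) * (3*t^2 + 1) = 0 := by
    rcases mul_eq_zero.mp key2.symm with h | h
    · exact h
    · exact absurd h hq.ne'
  have hzero : 3 * Real.sin (β₀/2) + Real.sin (3*β₀/2)
        + (Real.sqrt 2 - 1) * (-3 * Real.cos (β₀/2) + Real.cos (3*β₀/2)) = 0 := by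
    rw [key_ident β₀ hC.ne', ← htdef, hp, mul_zero]
  exact ⟨⟨β₀, ⟨⟨hβ00, hβ01⟩, hzero⟩, fun y hy => uniq y hy.1 hy.2⟩,
    fun β hβ hf => uniq β hβ hf⟩
end
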